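/- Let f : [n]^k → {−1,0,1}^k × {±1} be a monotone sign function whose induced map x ↦ x + f(x)_{[k]} maps [n]^k to [n]^k. If for every slice s and every x ∈ L_s with x ≺ J_s(f) there is i ∈ F(s) with x_i < J_s(f)_i and f(x)_i = +1, and symmetrically for M_s(f), then for every slice s we have J_s(f) = M_s(f), and this common point is the unique point z ∈ L_s with f(z)_i = 0 for all i ∈ F(s). Conversely, if f has a unique such zero point on every slice, then that point equals J_s(f) = M_s(f). -/
import Mathlib


/-- Symbols of the partial-information alphabet: −1, 0, 1, ≤, ≥, ◇. -/
inductive PISym : Type where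
  | neg | zero | pos | sle | sge | dia
deriving DecidableEq

/-- Points of the `k`-dimensional grid, as integer vectors. -/
abbrev Pt (k : ℕ) := Fin k → ℤ

/-- `x ∈ [n]^k`. -/
def inGrid (n k : ℕ) (x : Pt k) : Prop := ∀ i, 1 ≤ x i ∧ x i ≤ (n : ℤ)

/-- The `i`-th standard unit vector. -/
def eVec (k : ℕ) (i : Fin k) : Pt k := fun j => if j = i then 1 else 0

/-- A slice of `[n]^k`: `none` marks a free coordinate. -/
abbrev Slice (k : ℕ) := Fin k → Option ℤ

def fullSlice (k : ℕ) : Slice k := fun _ => none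

def validSlice (n : ℕ) {k : ℕ} (s : Slice k) : Prop :=
  ∀ i v, s i = some v → 1 ≤ v ∧ v ≤ (n : ℤ)

def inSlice {k : ℕ} (s : Slice k) (x : Pt k) : Prop :=
  ∀ i v, s i = some v → x i = v

/-- Monotone partial-information function (Definition 2.4). -/
def MonoPI (n k : ℕ) (p1 : Pt k → Fin k → PISym) (p2 : Pt k → PISym) : Prop :=
  (∀ x, inGrid n k x → p2 x = PISym.pos ∨ p2 x = PISym.neg ∨ p2 x = PISym.dia) ∧
  (∀ x y, inGrid n k x → inGrid n k y → ∀ i : Fin k,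
    (p1 x i = PISym.pos → x ≤ y → y i = x i →
      p1 y i = PISym.pos ∧
        (y i < (n : ℤ) → p1 (y + eVec k i) i ∈ ({PISym.pos, PISym.zero, PISym.sge} : Set PISym))) ∧
    (p1 x i = PISym.neg → y ≤ x → y i = x i →
      p1 y i = PISym.neg ∧
        (1 < y i → p1 (y - eVec k i) i ∈ ({PISym.neg, PISym.zero, PISym.sle} : Set PISym))) ∧
    (p1 x i = PISym.zero → y ≤ x → y i = x i →
      p1 y i ∈ ({PISym.zero, PISym.neg, PISym.sle} : Set PISym)) ∧
    (p1 x i = PISym.zero → x ≤ y → y i = x i →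
      p1 y i ∈ ({PISym.zero, PISym.pos, PISym.sge} : Set PISym)) ∧
    (p1 x i = PISym.sle → y ≤ x → y i = x i → p1 y i ∈ ({PISym.neg, PISym.sle} : Set PISym)) ∧
    (p1 x i = PISym.sge → x ≤ y → y i = x i → p1 y i ∈ ({PISym.pos, PISym.sge} : Set PISym))) ∧
  (∀ x, inGrid n k x → ∀ i : Fin k,
    (x i = 1 → p1 x i ∈ ({PISym.zero, PISym.pos, PISym.sge} : Set PISym)) ∧
    (x i = (n : ℤ) → p1 x i ∈ ({PISym.zero, PISym.neg, PISym.sle} : Set PISym))) ∧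
  (∀ x y, inGrid n k x → inGrid n k y → x ≤ y →
    (p2 x = PISym.pos → p2 y = PISym.pos) ∧ (p2 y = PISym.neg → p2 x = PISym.neg))

/-- Postfixed points of a PI function on a slice. -/
def Post (n k : ℕ) (p1 : Pt k → Fin k → PISym) (s : Slice k) : Set (Pt k) :=
  {x | inGrid n k x ∧ inSlice s x ∧
       ∀ i, s i = none → p1 x i ∈ ({PISym.pos, PISym.zero, PISym.sge} : Set PISym)}

/-- Prefixed points of a PI function on a slice. -/
def Pre (n k : ℕ) (p1 : Pt k → Fin k → PISym) (s : Slice k) : Set (Pt k) :=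
  {x | inGrid n k x ∧ inSlice s x ∧
       ∀ i, s i = none → p1 x i ∈ ({PISym.neg, PISym.zero, PISym.sle} : Set PISym)}

/-- Safe PI functions (Definition 2.8). -/
def SafePI (n k : ℕ) (p1 : Pt k → Fin k → PISym) (p2 : Pt k → PISym) : Prop :=
  MonoPI n k p1 p2 ∧
  ∀ s : Slice k, validSlice n s →
    (∀ J, IsGreatest (Post n k p1 s) J →
      ∀ x, inGrid n k x → inSlice s x → x ≤ J → x ≠ J →
        (∀ i, s i = none → x i < J i →
          p1 x i ∈ ({PISym.neg, PISym.zero, PISym.pos} : Set PISym)) ∧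
        (∃ i, s i = none ∧ x i < J i ∧ p1 x i = PISym.pos)) ∧
    (∀ M, IsLeast (Pre n k p1 s) M →
      ∀ x, inGrid n k x → inSlice s x → M ≤ x → x ≠ M →
        (∀ i, s i = none → M i < x i →
          p1 x i ∈ ({PISym.neg, PISym.zero, PISym.pos} : Set PISym)) ∧
        (∃ i, s i = none ∧ M i < x i ∧ p1 x i = PISym.neg))

/-- `x^{−i}` for `i ∈ [k]`. -/
def dminus {k : ℕ} (i : Fin k) (x : Pt k) : Pt k :=
  fun j => if j ≠ i ∧ 1 < x j then x j - 1 else x j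

/-- `x^{−(k+1)}`. -/
def dminusAll {k : ℕ} (x : Pt k) : Pt k :=
  fun j => if 1 < x j then x j - 1 else x j

/-- `x^{+i}` for `i ∈ [k]`. -/
def dplus (n : ℕ) {k : ℕ} (i : Fin k) (x : Pt k) : Pt k :=
  fun j => if j ≠ i ∧ x j < (n : ℤ) then x j + 1 else x j

/-- `x^{+(k+1)}`. -/
def dplusAll (n : ℕ) {k : ℕ} (x : Pt k) : Pt k :=
  fun j => if x j < (n : ℤ) then x j + 1 else x j

def IntPlus {k : ℕ} (p1 : Pt k → Fin k → PISym) (i : Fin k) : Set (Pt k) :=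
  {x | p1 (dminus i x) i = PISym.pos}

def IntPlusLast {k : ℕ} (p1 : Pt k → Fin k → PISym) (p2 : Pt k → PISym) : Set (Pt k) :=
  {x | p2 (dminusAll x) = PISym.pos ∨
    ∃ i, p1 (dminus i x) i ∈ ({PISym.pos, PISym.zero, PISym.sge} : Set PISym) ∧
         p2 (dminus i x) = PISym.pos}

def IntMinus (n : ℕ) {k : ℕ} (p1 : Pt k → Fin k → PISym) (i : Fin k) : Set (Pt k) :=
  {x | p1 (dplus n i x) i = PISym.neg}

def IntMinusLast (n : ℕ) {k : ℕ} (p1 : Pt k → Fin k → PISym) (p2 : Pt k → PISym) : Set (Pt k) :=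
  {x | p2 (dplusAll n x) = PISym.neg ∨
    ∃ i, p1 (dplus n i x) i ∈ ({PISym.neg, PISym.zero, PISym.sle} : Set PISym) ∧
         p2 (dplus n i x) = PISym.neg}

/-- `Cand⁺(p)` relative to `J = J(p)` and `M = M(p)`. -/
def CandPlus (n k : ℕ) (p1 : Pt k → Fin k → PISym) (p2 : Pt k → PISym) (J M : Pt k) :
    Set (Pt k) :=
  {x | inGrid n k x ∧ J ≤ x ∧ x ≤ M ∧
    (∀ i, p1 x i ≠ PISym.neg ∧ x ∉ IntPlus p1 i) ∧
    p2 x ≠ PISym.neg ∧ x ∉ IntPlusLast p1 p2}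

/-- `Cand⁻(p)` relative to `J = J(p)` and `M = M(p)`. -/
def CandMinus (n k : ℕ) (p1 : Pt k → Fin k → PISym) (p2 : Pt k → PISym) (J M : Pt k) :
    Set (Pt k) :=
  {x | inGrid n k x ∧ J ≤ x ∧ x ≤ M ∧
    (∀ i, p1 x i ≠ PISym.pos ∧ x ∉ IntMinus n p1 i) ∧
    p2 x ≠ PISym.pos ∧ x ∉ IntMinusLast n p1 p2}

/-- The information partial order on symbols: `symDom a b` means `a ⇒ b`. -/
def symDom (a b : PISym) : Prop :=
  b = PISym.dia ∨ a = b ∨ (a = PISym.pos ∧ b = PISym.sge) ∨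
  (a = PISym.zero ∧ (b = PISym.sge ∨ b = PISym.sle)) ∨ (a = PISym.neg ∧ b = PISym.sle)

/-- `p ⇒ p'`: `p` dominates (is more informative than) `p'`. -/
def PIdom (n k : ℕ) (p1 : Pt k → Fin k → PISym) (p2 : Pt k → PISym)
    (q1 : Pt k → Fin k → PISym) (q2 : Pt k → PISym) : Prop :=
  ∀ x, inGrid n k x → (∀ i, symDom (p1 x i) (q1 x i)) ∧ symDom (p2 x) (q2 x)

/-- A sign value `a ∈ {−1,0,1}` is consistent with a symbol `b`. -/
def consS (a : ℤ) (b : PISym) : Prop :=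
  match b with
  | PISym.dia => True
  | PISym.pos => a = 1
  | PISym.neg => a = -1
  | PISym.zero => a = 0
  | PISym.sge => a = 0 ∨ a = 1
  | PISym.sle => a = -1 ∨ a = 0

/-- A sign function `f` is consistent with the PI function `p` (i.e., `f ⇒ p`). -/
def SignCons (n k : ℕ) (f1 : Pt k → Pt k) (f2 : Pt k → ℤ)
    (p1 : Pt k → Fin k → PISym) (p2 : Pt k → PISym) : Prop :=
  ∀ x, inGrid n k x → (∀ i, consS (f1 x i) (p1 x i)) ∧ consS (f2 x) (p2 x)

/-- Monotone sign function: `x ↦ (x + f1 x, f2 x)` is well defined and monotone. -/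
def MonoSign (n k : ℕ) (f1 : Pt k → Pt k) (f2 : Pt k → ℤ) : Prop :=
  (∀ x, inGrid n k x →
    (∀ i, f1 x i = -1 ∨ f1 x i = 0 ∨ f1 x i = 1) ∧ (f2 x = 1 ∨ f2 x = -1)) ∧
  (∀ x, inGrid n k x → inGrid n k (x + f1 x)) ∧
  (∀ a b, inGrid n k a → inGrid n k b → a ≤ b → a + f1 a ≤ b + f1 b ∧ f2 a ≤ f2 b)

def PostF (n k : ℕ) (f1 : Pt k → Pt k) (s : Slice k) : Set (Pt k) :=
  {x | inGrid n k x ∧ inSlice s x ∧ ∀ i, s i = none → 0 ≤ f1 x i}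

def PreF (n k : ℕ) (f1 : Pt k → Pt k) (s : Slice k) : Set (Pt k) :=
  {x | inGrid n k x ∧ inSlice s x ∧ ∀ i, s i = none → f1 x i ≤ 0}

/-- Safe sign functions (conditions (1') and (2') of Definition 2.8). -/
def SafeSign (n k : ℕ) (f1 : Pt k → Pt k) (f2 : Pt k → ℤ) : Prop :=
  MonoSign n k f1 f2 ∧
  ∀ s : Slice k, validSlice n s →
    (∀ J, IsGreatest (PostF n k f1 s) J →
      ∀ x, inGrid n k x → inSlice s x → x ≤ J → x ≠ J →
        ∃ i, s i = none ∧ x i < J i ∧ f1 x i = 1) ∧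
    (∀ M, IsLeast (PreF n k f1 s) M →
      ∀ x, inGrid n k x → inSlice s x → M ≤ x → x ≠ M →
        ∃ i, s i = none ∧ M i < x i ∧ f1 x i = -1)

/-- The revealed solutions of a PI function. -/
def SolPI (n k : ℕ) (p1 : Pt k → Fin k → PISym) (p2 : Pt k → PISym) : Set (Pt k) :=
  {x | inGrid n k x ∧
    (((∀ i, p1 x i ∈ ({PISym.pos, PISym.zero, PISym.sge} : Set PISym)) ∧ p2 x = PISym.pos) ∨
     ((∀ i, p1 x i ∈ ({PISym.neg, PISym.zero, PISym.sle} : Set PISym)) ∧ p2 x = PISym.neg))}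

/-- `x ≪_s y` : `x ⪯ y` with strict inequality in every free coordinate of `s`. -/
def lls {k : ℕ} (s : Slice k) (x y : Pt k) : Prop :=
  x ≤ y ∧ ∀ i, s i = none → x i < y i

/-- `s` is a slice witnessing `ŝ(x,p) ≠ nil`: `x ∈ L_s` and `x ≪_s J_s(p)`. -/
def HasSlice (n k : ℕ) (p1 : Pt k → Fin k → PISym) (x : Pt k) (s : Slice k) : Prop :=
  validSlice n s ∧ inSlice s x ∧ ∃ J, IsGreatest (Post n k p1 s) J ∧ lls s x J

/-- `s = ŝ(x,p)`: `s` is the maximal slice with `x ∈ L_s` and `x ≪_s J_s(p)`. -/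
def MaxSlice (n k : ℕ) (p1 : Pt k → Fin k → PISym) (x : Pt k) (s : Slice k) : Prop :=
  HasSlice n k p1 x s ∧
  ∀ s', HasSlice n k p1 x s' → ∀ i, s' i = none → s i = none

lemma grid_of_choice {n k : ℕ} {x y z : Pt k} (hx : inGrid n k x) (hy : inGrid n k y)
    (h : ∀ j, z j = x j ∨ z j = y j) : inGrid n k z := by
  intro j
  rcases h j with h | h
  · rw [h]; exact hx j
  · rw [h]; exact hy j

lemma zeroJ {n k : ℕ} {f1 : Pt k → Pt k} {f2 : Pt k → ℤ} (hf : MonoSign n k f1 f2)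
    {s : Slice k} {J : Pt k} (hJ : IsGreatest (PostF n k f1 s) J) :
    ∀ i, s i = none → f1 J i = 0 := by
  obtain ⟨hJg, hJs, hJp⟩ := hJ.1
  set z : Pt k := fun j => if s j = none then J j + f1 J j else J j with hz
  have hJz : J ≤ z := by
    intro j
    by_cases h : s j = none
    · simp only [hz, h, if_pos]
      have := hJp j h; linarith
    · simp [hz, h]
  have hzg : inGrid n k z := by
    refine grid_of_choice hJg (hf.2.1 J hJg) fun j => ?_
    by_cases h : s j = none
    · right; simp [hz, h]
    · left; simp [hz, h]
  have hzs : inSlice s z := by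
    intro j v hj
    have : ¬ s j = none := by simp [hj]
    simp only [hz, this, if_neg, if_false]
    exact hJs j v hj
  have hzpost : z ∈ PostF n k f1 s := by
    refine ⟨hzg, hzs, fun i hi => ?_⟩
    have hm := (hf.2.2 J z hJg hzg hJz).1 i
    simp only [Pi.add_apply] at hm
    have hzi : z i = J i + f1 J i := by simp [hz, hi]
    linarith [hm, hzi ▸ hm]
  have hle := hJ.2 hzpost
  intro i hi
  have h1 := hle i
  have hzi : z i = J i + f1 J i := by simp [hz, hi]
  have h2 := hJp i hi
  rw [hzi] at h1
  linarith

lemma zeroM {n k : ℕ} {f1 : Pt k → Pt k} {f2 : Pt k → ℤ} (hf : MonoSign n k f1 f2)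
    {s : Slice k} {M : Pt k} (hM : IsLeast (PreF n k f1 s) M) :
    ∀ i, s i = none → f1 M i = 0 := by
  obtain ⟨hMg, hMs, hMp⟩ := hM.1
  set z : Pt k := fun j => if s j = none then M j + f1 M j else M j with hz
  have hzM : z ≤ M := by
    intro j
    by_cases h : s j = none
    · simp only [hz, h, if_pos]
      have := hMp j h; linarith
    · simp [hz, h]
  have hzg : inGrid n k z := by
    refine grid_of_choice hMg (hf.2.1 M hMg) fun j => ?_
    by_cases h : s j = none
    · right; simp [hz, h]
    · left; simp [hz, h]
  have hzs : inSlice s z := by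
    intro j v hj
    have : ¬ s j = none := by simp [hj]
    simp only [hz, this, if_neg, if_false]
    exact hMs j v hj
  have hzpre : z ∈ PreF n k f1 s := by
    refine ⟨hzg, hzs, fun i hi => ?_⟩
    have hm := (hf.2.2 z M hzg hMg hzM).1 i
    simp only [Pi.add_apply] at hm
    have hzi : z i = M i + f1 M i := by simp [hz, hi]
    linarith [hzi ▸ hm]
  have hle := hM.2 hzpre
  intro i hi
  have h1 := hle i
  have hzi : z i = M i + f1 M i := by simp [hz, hi]
  have h2 := hMp i hi
  rw [hzi] at h1
  linarith

lemma JleM {n k : ℕ} {f1 : Pt k → Pt k} {f2 : Pt k → ℤ} (hf : MonoSign n k f1 f2)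
    {s : Slice k} {J M : Pt k}
    (hJ : IsGreatest (PostF n k f1 s) J) (hM : IsLeast (PreF n k f1 s) M)
    (hsafe : ∀ x, inGrid n k x → inSlice s x → M ≤ x → x ≠ M →
        ∃ i, s i = none ∧ M i < x i ∧ f1 x i = -1) : J ≤ M := by
  obtain ⟨hJg, hJs, hJp⟩ := hJ.1
  obtain ⟨hMg, hMs, hMp⟩ := hM.1
  set y : Pt k := fun j => max (J j) (M j) with hy
  have hyg : inGrid n k y := grid_of_choice hJg hMg fun j => max_choice _ _
  have hys : inSlice s y := by
    intro j v hj
    simp [hy, hJs j v hj, hMs j v hj]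
  have hMy : M ≤ y := fun j => le_max_right _ _
  have hJy : J ≤ y := fun j => le_max_left _ _
  by_cases hyM : y = M
  · intro j
    have := congrFun hyM j
    calc J j ≤ y j := hJy j
    _ = M j := this
  · exfalso
    obtain ⟨i, hi, hMi, hfi⟩ := hsafe y hyg hys hMy hyM
    have hyi : y i = J i := by
      rcases max_choice (J i) (M i) with h | h
      · exact h
      · exfalso; rw [hy] at hMi; simp only at hMi; omega
    have hm := (hf.2.2 J y hJg hyg hJy).1 i
    simp only [Pi.add_apply] at hm
    have := hJp i hi
    rw [hyi, hfi] at hm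
    linarith

/-- Lemma 2.10 (detailed form): under the safety conditions `J_s(f) = M_s(f)` is
the unique zero point on every slice; conversely a unique zero point must equal
`J_s(f)` and `M_s(f)`. -/
theorem stmt19 (n k : ℕ) (hn : 1 ≤ n) (f1 : Pt k → Pt k) (f2 : Pt k → ℤ)
    (hf : MonoSign n k f1 f2) :
    ((∀ s : Slice k, validSlice n s →
        (∀ J, IsGreatest (PostF n k f1 s) J →
          ∀ x, inGrid n k x → inSlice s x → x ≤ J → x ≠ J →
            ∃ i, s i = none ∧ x i < J i ∧ f1 x i = 1) ∧
        (∀ M, IsLeast (PreF n k f1 s) M →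
          ∀ x, inGrid n k x → inSlice s x → M ≤ x → x ≠ M →
            ∃ i, s i = none ∧ M i < x i ∧ f1 x i = -1)) →
      ∀ s : Slice k, validSlice n s →
        ∀ J M, IsGreatest (PostF n k f1 s) J → IsLeast (PreF n k f1 s) M →
          J = M ∧ (∀ i, s i = none → f1 J i = 0) ∧
          (∀ z, inGrid n k z → inSlice s z → (∀ i, s i = none → f1 z i = 0) →
            z = J)) ∧
    ((∀ s : Slice k, validSlice n s →
        ∃! z : Pt k, inGrid n k z ∧ inSlice s z ∧ ∀ i, s i = none → f1 z i = 0) →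
      ∀ s : Slice k, validSlice n s →
        ∀ z, inGrid n k z → inSlice s z → (∀ i, s i = none → f1 z i = 0) →
          ∀ J M, IsGreatest (PostF n k f1 s) J → IsLeast (PreF n k f1 s) M →
            z = J ∧ z = M) := by
  constructor
  · intro hsafe s hs J M hJ hM
    have hJzero := zeroJ hf hJ
    have hJM : J ≤ M := JleM hf hJ hM ((hsafe s hs).2 M hM)
    have hJpre : J ∈ PreF n k f1 s := ⟨hJ.1.1, hJ.1.2.1, fun i hi => by rw [hJzero i hi]⟩
    have hMJ : M ≤ J := hM.2 hJpre
    have hJM' : J = M := le_antisymm hJM hMJ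
    refine ⟨hJM', hJzero, fun z hzg hzs hz0 => ?_⟩
    have hzJ : z ≤ J := hJ.2 ⟨hzg, hzs, fun i hi => by rw [hz0 i hi]⟩
    have hMz : M ≤ z := hM.2 ⟨hzg, hzs, fun i hi => by rw [hz0 i hi]⟩
    exact le_antisymm hzJ (hJM' ▸ hMz)
  · intro h s hs z hzg hzs hz0 J M hJ hM
    obtain ⟨z0, _, hu⟩ := h s hs
    have hz := hu z ⟨hzg, hzs, hz0⟩
    have hJ0 := hu J ⟨hJ.1.1, hJ.1.2.1, zeroJ hf hJ⟩
    have hM0 := hu M ⟨hM.1.1, hM.1.2.1, zeroM hf hM⟩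
    exact ⟨hz.trans hJ0.symm, hz.trans hM0.symm⟩
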